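/- Under the uniform magnitude condition θ_{m,k} = c_m σ_{m,k} (c_m ≥ 0, σ_{m,k} ∈ {±1}) for the Faber–Schauder coefficients, the normalized dyadic increment of the resulting series x over the level-n interval [k2^{−n}, (k+1)2^{−n}] admits the representation 2^{n/p}(x((k+1)2^{−n}) − x(k2^{−n})) = Σ_{j=1}^n ρ^j y_{n−j} ε_j(k), where ρ := 2^{−(1−1/p)}, y_m := 2^{m(1/p−1/2)} c_m, and ε_j(k) ∈ {±1} is the product of the coefficient sign and the Haar sign of the level-(n−j) Schauder function on that interval. -/

import Mathlib

/-!
On the grid of mesh `2⁻ⁿ` the Faber–Schauder function `e_{m,i}` vanishes for `m ≥ n`, while for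
`m < n` it is `2^{m/2 - n}` times an integer tent of half-width `2^{n-m-1}`. A tent has unit
increments `+1` on the left half of its support, `-1` on the right half and `0` elsewhere, so the
level-`n` increment of `x` picks from each level `m < n` only the ancestor coefficient
`θ_{m,⌊k/2^{n-m}⌋}`, with the Haar sign; the powers of `2` then regroup as `ρ^j y_{n-j}`.
-/

/-- The Faber–Schauder function `e_{m,k}`. -/
noncomputable def faberSchauder (m k : ℕ) (t : ℝ) : ℝ :=
  (2 : ℝ) ^ ((m : ℝ) / 2) *
    max 0 ((2 : ℝ) ^ (-(m : ℝ) - 1) - |t - (2 * (k : ℝ) + 1) / 2 ^ (m + 1)|)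

open Finset

def tent (N c a : ℤ) : ℤ := max 0 (N - |a - c|)

lemma tent_succ_sub_tent (N i k : ℕ) (hN : 0 < N) :
    tent N ((2 * i + 1) * N) (k + 1) - tent N ((2 * i + 1) * N) k =
      if i = k / (2 * N) then (if k / N % 2 = 0 then 1 else -1) else 0 := by
  have hdiv := Nat.div_add_mod k (2 * N)
  have hr : k % (2 * N) < 2 * N := Nat.mod_lt _ (by omega)
  have hsign : k / N % 2 = k % (2 * N) / N := by rw [← Nat.mod_mul_right_div_self, mul_comm]
  generalize k / (2 * N) = j at *
  generalize k % (2 * N) = r at *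
  have hk : (k : ℤ) = 2 * (j * N) + r := by rw [← hdiv]; push_cast; ring
  -- `omega` treats `i * N` and `j * N` as atoms: the linear facts relating them are supplied here.
  have hc : ((2 * i + 1) * N : ℤ) = 2 * (i * N) + N := by ring
  have hfar {a b : ℕ} (hab : a < b) : (a : ℤ) * N + N ≤ b * N := by
    exact_mod_cast (add_one_mul a N).symm.trans_le (Nat.mul_le_mul_right N hab)
  rcases lt_trichotomy i j with hij | rfl | hij
  · have hgap := hfar hij
    rw [if_neg hij.ne]
    simp only [tent, abs_eq_max_neg, max_def]
    split_ifs <;> omega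
  · have hlow : r < N → r / N = 0 := Nat.div_eq_of_lt
    have hhigh : N ≤ r → r / N = 1 := fun h => Nat.div_eq_of_lt_le (by omega) (by omega)
    rw [if_pos rfl]
    simp only [tent, abs_eq_max_neg, max_def]
    split_ifs <;> omega
  · have hgap := hfar hij
    rw [if_neg hij.ne']
    simp only [tent, abs_eq_max_neg, max_def]
    split_ifs <;> omega

lemma faberSchauder_dyadic (m q i a : ℕ) :
    faberSchauder m i (a / 2 ^ (m + 1 + q)) =
      2 ^ ((m : ℝ) / 2) * tent (2 ^ q) ((2 * i + 1) * 2 ^ q) a / 2 ^ (m + 1 + q) := by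
  have hD : (0 : ℝ) < 2 ^ (m + 1 + q) := by positivity
  have hhalf : (2 : ℝ) ^ (-(m : ℝ) - 1) = 2 ^ q / 2 ^ (m + 1 + q) := by
    rw [pow_add, div_mul_cancel_right₀ (by positivity), ← neg_add', Real.rpow_neg zero_le_two]
    norm_cast
  have hdist : |(a : ℝ) / 2 ^ (m + 1 + q) - (2 * i + 1) / 2 ^ (m + 1)| =
      |(a : ℝ) - (2 * i + 1) * 2 ^ q| / 2 ^ (m + 1 + q) := by
    rw [← abs_of_pos hD, ← abs_div, abs_of_pos hD, pow_add _ (m + 1)]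
    congr 1
    field_simp
  unfold faberSchauder tent
  rw [hhalf, hdist, ← sub_div, ← zero_div (2 ^ (m + 1 + q)), max_div_div_right hD.le]
  push_cast
  ring

lemma faberSchauder_dyadic_eq_zero {m n : ℕ} (h : n ≤ m) (i a : ℕ) :
    faberSchauder m i (a / 2 ^ n) = 0 := by
  obtain ⟨d, rfl⟩ := Nat.exists_eq_add_of_le h
  have hpt : (a : ℝ) / 2 ^ n = ((2 * (a * 2 ^ d) : ℕ) : ℝ) / 2 ^ (n + d + 1 + 0) := by
    rw [add_zero, pow_succ, pow_add]
    push_cast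
    field_simp
  have htent (b : ℕ) : tent (2 ^ 0) ((2 * i + 1) * 2 ^ 0) (2 * b : ℕ) = 0 := by
    simp only [tent, abs_eq_max_neg, max_def, pow_zero, mul_one]
    split_ifs <;> omega
  rw [hpt, faberSchauder_dyadic, htent, Int.cast_zero, mul_zero, zero_div]

lemma tsum_faberSchauder_dyadic (θ : ℕ → ℕ → ℝ) (n a : ℕ) :
    ∑' m : ℕ, ∑ i ∈ range (2 ^ m), θ m i * faberSchauder m i (a / 2 ^ n) =
      ∑ m ∈ range n, ∑ i ∈ range (2 ^ m), θ m i * faberSchauder m i (a / 2 ^ n) :=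
  tsum_eq_sum fun m hm => sum_eq_zero fun i _ => by
    rw [faberSchauder_dyadic_eq_zero (not_lt.mp (mem_range.not.mp hm)), mul_zero]

lemma faberSchauder_increment (m j i k : ℕ) (hj : 1 ≤ j) :
    faberSchauder m i (((k : ℝ) + 1) / 2 ^ (m + j)) - faberSchauder m i (k / 2 ^ (m + j)) =
      if i = k / 2 ^ j then
        (if k / 2 ^ (j - 1) % 2 = 0 then 1 else -1) * 2 ^ ((m : ℝ) / 2) / 2 ^ (m + j)
      else 0 := by
  obtain ⟨q, rfl⟩ : ∃ q, j = 1 + q := ⟨j - 1, by omega⟩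
  have hinc := tent_succ_sub_tent (2 ^ q) i k (by positivity)
  rw [← pow_succ', add_comm q 1] at hinc
  push_cast at hinc
  rw [← add_assoc, ← Nat.cast_succ, faberSchauder_dyadic, faberSchauder_dyadic, ← sub_div,
    ← mul_sub, Nat.cast_succ, ← Int.cast_sub, hinc, Nat.add_sub_cancel_left]
  split_ifs <;> simp

lemma sum_faberSchauder_increment (θ : ℕ → ℕ → ℝ) (m j k : ℕ) (hj : 1 ≤ j)
    (hk : k < 2 ^ (m + j)) :
    ∑ i ∈ range (2 ^ m), θ m i * faberSchauder m i (((k : ℝ) + 1) / 2 ^ (m + j)) -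
        ∑ i ∈ range (2 ^ m), θ m i * faberSchauder m i (k / 2 ^ (m + j)) =
      θ m (k / 2 ^ j) *
        ((if k / 2 ^ (j - 1) % 2 = 0 then 1 else -1) * 2 ^ ((m : ℝ) / 2) / 2 ^ (m + j)) := by
  have hmem : k / 2 ^ j ∈ range (2 ^ m) :=
    mem_range.mpr (Nat.div_lt_of_lt_mul (by rwa [← pow_add, add_comm]))
  simp only [← sum_sub_distrib, ← mul_sub, faberSchauder_increment _ _ _ _ hj, mul_ite, mul_zero,
    sum_ite_eq', if_pos hmem]

lemma two_rpow_scaling (s : ℝ) (m j : ℕ) :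
    (2 : ℝ) ^ (((m + j : ℕ) : ℝ) * s) * (2 ^ ((m : ℝ) / 2) / 2 ^ (m + j)) =
      ((2 : ℝ) ^ (-(1 - s))) ^ j * 2 ^ ((m : ℝ) * (s - 1 / 2)) := by
  rw [mul_div_assoc', ← Real.rpow_natCast 2 (m + j), ← Real.rpow_natCast (2 ^ _) j,
    ← Real.rpow_add two_pos, ← Real.rpow_sub two_pos, ← Real.rpow_mul zero_le_two,
    ← Real.rpow_add two_pos]
  congr 1
  push_cast
  ring

theorem stmt16_general (p : ℝ)
    (θ : ℕ → ℕ → ℝ) (c : ℕ → ℝ) (σ : ℕ → ℕ → ℝ)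
    (hθ : ∀ m k, θ m k = c m * σ m k)
    (n : ℕ) (k : ℕ) (hk : k < 2 ^ n) :
    (2 : ℝ) ^ ((n : ℝ) / p) *
        ((∑' m : ℕ, ∑ i ∈ Finset.range (2 ^ m),
            θ m i * faberSchauder m i (((k : ℝ) + 1) / 2 ^ n)) -
          (∑' m : ℕ, ∑ i ∈ Finset.range (2 ^ m),
            θ m i * faberSchauder m i ((k : ℝ) / 2 ^ n)))
      = ∑ j ∈ Finset.Icc 1 n,
          ((2 : ℝ) ^ (-(1 - 1 / p))) ^ j *
            ((2 : ℝ) ^ (((n - j : ℕ) : ℝ) * (1 / p - 1 / 2)) * c (n - j)) *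
            (σ (n - j) (k / 2 ^ j) *
              (if k / 2 ^ (j - 1) % 2 = 0 then (1 : ℝ) else -1)) := by
  rw [← Nat.cast_succ, tsum_faberSchauder_dyadic, tsum_faberSchauder_dyadic, Nat.cast_succ,
    ← sum_sub_distrib, mul_sum]
  symm
  refine sum_nbij' (n - ·) (n - ·)
    (fun j hj => by simp only [mem_Icc, mem_range] at hj ⊢; omega)
    (fun m hm => by simp only [mem_Icc, mem_range] at hm ⊢; omega)
    (fun j hj => by simp only [mem_Icc] at hj; omega)
    (fun m hm => by simp only [mem_range] at hm; omega) fun j hj => ?_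
  obtain ⟨hj1, hjn⟩ := mem_Icc.mp hj
  obtain ⟨m, rfl⟩ : ∃ m, n = m + j := ⟨n - j, by omega⟩
  have hscale := two_rpow_scaling (1 / p) m j
  rw [← div_eq_mul_one_div] at hscale
  rw [Nat.add_sub_cancel, sum_faberSchauder_increment θ m j k hj1 hk, hθ]
  linear_combination
    (-(c m * σ m (k / 2 ^ j) * if k / 2 ^ (j - 1) % 2 = 0 then 1 else -1)) * hscale

/-- under the uniform magnitude condition `θ_{m,k} = c_m σ_{m,k}`, the
normalized dyadic increment of the Faber–Schauder series over `[k2^{−n},(k+1)2^{−n}]`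
is `2^{n/p} Δ_k^n x = Σ_{j=1}^n ρ^j y_{n−j} ε_j(k)`, where `ρ = 2^{−(1−1/p)}`,
`y_m = 2^{m(1/p−1/2)} c_m`, and `ε_j(k)` is the product of the coefficient sign
`σ_{n−j,⌊k/2^j⌋}` and the Haar sign (`+1` iff `⌊k/2^{j−1}⌋` is even). -/
theorem stmt16 (p : ℝ) (hp : 1 < p)
    (θ : ℕ → ℕ → ℝ) (c : ℕ → ℝ) (σ : ℕ → ℕ → ℝ)
    (hc : ∀ m, 0 ≤ c m) (hσ : ∀ m k, σ m k = 1 ∨ σ m k = -1)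
    (hθ : ∀ m k, θ m k = c m * σ m k)
    (n : ℕ) (hn : 1 ≤ n) (k : ℕ) (hk : k < 2 ^ n) :
    (2 : ℝ) ^ ((n : ℝ) / p) *
        ((∑' m : ℕ, ∑ i ∈ Finset.range (2 ^ m),
            θ m i * faberSchauder m i (((k : ℝ) + 1) / 2 ^ n)) -
          (∑' m : ℕ, ∑ i ∈ Finset.range (2 ^ m),
            θ m i * faberSchauder m i ((k : ℝ) / 2 ^ n)))
      = ∑ j ∈ Finset.Icc 1 n,
          ((2 : ℝ) ^ (-(1 - 1 / p))) ^ j *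
            ((2 : ℝ) ^ (((n - j : ℕ) : ℝ) * (1 / p - 1 / 2)) * c (n - j)) *
            (σ (n - j) (k / 2 ^ j) *
              (if k / 2 ^ (j - 1) % 2 = 0 then (1 : ℝ) else -1)) :=
  stmt16_general p θ c σ hθ n k hk
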